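/- Let env be an LTLf formula, A_e = (2^(X∪Y), Q_e, I_e, δ_e, Safe(S)) a DA with L(A_e) = {π : π ⊨∀ env}, Env the environment winning region of the safety game on A_e, and h a history such that the run of A_e on h visits only states of Env; let q_h be the state of A_e reached after reading h. Then an environment strategy γ belongs to ⟦env, af(h)⟧ = {γ : for every agent strategy σ, h·Trace(γ,σ) ⊨∀ env} if and only if for every agent strategy σ the run of A_e on Trace(γ,σ) started from q_h visits only states in Env. -/
import Mathlib


/- Common framework: traces, strategies, LTLf, plays, deterministic automata and games,
   following the setting of "LTLf synthesis with duties and rights". -/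

namespace RightsSynth

/-- An environment move: a propositional interpretation over the environment variables
(an element of `2^X`). -/
abbrev EMove (Xv : Type) := Xv → Bool

/-- An agent move: a propositional interpretation over the agent variables (element of `2^Y`). -/
abbrev AMove (Yv : Type) := Yv → Bool

/-- A letter of the alphabet `2^(X ∪ Y)`. -/
abbrev Letter (Xv Yv : Type) := EMove Xv × AMove Yv

/-- An infinite trace. -/
abbrev ITrace (Xv Yv : Type) := ℕ → Letter Xv Yv

/-- A finite trace (history). -/
abbrev FTrace (Xv Yv : Type) := List (Letter Xv Yv)

/-- An environment strategy `γ : (2^Y)* → 2^X`. -/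
abbrev EnvStrat (Xv Yv : Type) := List (AMove Yv) → EMove Xv

/-- An agent strategy `σ : (2^X)^+ → 2^Y` (only ever applied to nonempty lists). -/
abbrev AgStrat (Xv Yv : Type) := List (EMove Xv) → AMove Yv

variable {Xv Yv : Type}

/-- The `stop` action: all agent variables set to false. -/
def stopMove : AMove Yv := fun _ => false

/-- The finite prefix consisting of the first `n` letters of an infinite trace
(so `pref π (k+1)` is the prefix `π^k` of the paper). -/
def pref (π : ITrace Xv Yv) (n : ℕ) : FTrace Xv Yv := (List.range n).map π

/-- A finite trace is a prefix of an infinite trace. -/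
def IsIPrefix (h : FTrace Xv Yv) (π : ITrace Xv Yv) : Prop := pref π h.length = h

/-- Concatenation `h · π` of a finite history with an infinite trace. -/
def fappend (h : FTrace Xv Yv) (π : ITrace Xv Yv) : ITrace Xv Yv := fun n =>
  if hn : n < h.length then h.get ⟨n, hn⟩ else π (n - h.length)

/-- Shift of an infinite trace by `k` positions. -/
def shift (π : ITrace Xv Yv) (k : ℕ) : ITrace Xv Yv := fun n => π (k + n)

/-- LTLf formulas over atoms `α`. -/
inductive LTLf (α : Type) : Type
  | atom : α → LTLf α
  | neg : LTLf α → LTLf α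
  | conj : LTLf α → LTLf α → LTLf α
  | next : LTLf α → LTLf α
  | untl : LTLf α → LTLf α → LTLf α

/-- Evaluation of an atom (a variable in `X ∪ Y`) at a letter. -/
def evalAtom (l : Letter Xv Yv) : Xv ⊕ Yv → Bool
  | Sum.inl x => l.1 x
  | Sum.inr y => l.2 y

/-- `SatAt π φ i` is `π, i ⊨ φ` over the finite trace `π`. -/
def SatAt (π : FTrace Xv Yv) : LTLf (Xv ⊕ Yv) → ℕ → Prop
  | .atom a, i => ∃ hi : i < π.length, evalAtom (π.get ⟨i, hi⟩) a = true
  | .neg φ, i => ¬ SatAt π φ i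
  | .conj φ ψ, i => SatAt π φ i ∧ SatAt π ψ i
  | .next φ, i => i + 1 < π.length ∧ SatAt π φ (i + 1)
  | .untl φ ψ, i =>
      ∃ j, i ≤ j ∧ j < π.length ∧ SatAt π ψ j ∧ ∀ k, i ≤ k → k < j → SatAt π φ k

/-- `π ⊨ φ`, i.e. `π, 0 ⊨ φ`. -/
def Sat (π : FTrace Xv Yv) (φ : LTLf (Xv ⊕ Yv)) : Prop := SatAt π φ 0

/-- An infinite trace satisfies `φ` on all (nonempty finite) prefixes: `π ⊨∀ φ`. -/
def SatAllPrefI (π : ITrace Xv Yv) (φ : LTLf (Xv ⊕ Yv)) : Prop :=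
  ∀ n : ℕ, Sat (pref π (n + 1)) φ

/-- The finite prefixes of the unique trace compatible with `γ` and `σ`. -/
def traceAux (γ : EnvStrat Xv Yv) (σ : AgStrat Xv Yv) : ℕ → FTrace Xv Yv
  | 0 => []
  | n + 1 =>
      let p := traceAux γ σ n
      let x := γ (p.map Prod.snd)
      p ++ [(x, σ (p.map Prod.fst ++ [x]))]

/-- `Trace(γ,σ)`: the unique infinite trace compatible with `γ` and `σ`. -/
def traceOf (γ : EnvStrat Xv Yv) (σ : AgStrat Xv Yv) : ITrace Xv Yv := fun n =>
  let p := traceAux γ σ n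
  let x := γ (p.map Prod.snd)
  (x, σ (p.map Prod.fst ++ [x]))

/-- An infinite trace is compatible with an environment strategy. -/
def EnvCompat (γ : EnvStrat Xv Yv) (π : ITrace Xv Yv) : Prop :=
  ∀ n, (π n).1 = γ ((pref π n).map Prod.snd)

/-- An infinite trace is compatible with an agent strategy. -/
def AgCompat (σ : AgStrat Xv Yv) (π : ITrace Xv Yv) : Prop :=
  ∀ n, (π n).2 = σ ((pref π (n + 1)).map Prod.fst)

/-- An agent strategy is compatible with a finite history `h`. -/
def AgCompatH (σ : AgStrat Xv Yv) (h : FTrace Xv Yv) : Prop :=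
  ∀ k (hk : k < h.length), (h.get ⟨k, hk⟩).2 = σ ((h.take (k + 1)).map Prod.fst)

/-- An environment strategy is compatible with a finite history `h`. -/
def EnvCompatH (γ : EnvStrat Xv Yv) (h : FTrace Xv Yv) : Prop :=
  ∀ k (hk : k < h.length), (h.get ⟨k, hk⟩).1 = γ ((h.take k).map Prod.snd)

/-- A history that contains no `stop` action. -/
def StopFree (h : FTrace Xv Yv) : Prop := ∀ l ∈ h, l.2 ≠ stopMove

/-- A stopping agent strategy: on every compatible trace it eventually plays `stop`
forever, and never plays `stop` before that. -/
def Stopping (σ : AgStrat Xv Yv) : Prop :=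
  ∀ π : ITrace Xv Yv, AgCompat σ π →
    ∃ i, (∀ j, i ≤ j → (π j).2 = stopMove) ∧ ∀ j, j < i → (π j).2 ≠ stopMove

/-- `Play(γ,σ)`: the finite prefix of `Trace(γ,σ)` ending right before the first `stop`. -/
noncomputable def play (γ : EnvStrat Xv Yv) (σ : AgStrat Xv Yv) : FTrace Xv Yv :=
  pref (traceOf γ σ) (sInf {i | ((traceOf γ σ) i).2 = stopMove})

/-- `γ ⊳ env`: the environment strategy `γ` enforces the safety specification `env`. -/
def EnforcesEnv (env : LTLf (Xv ⊕ Yv)) (γ : EnvStrat Xv Yv) : Prop :=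
  ∀ σ : AgStrat Xv Yv, SatAllPrefI (traceOf γ σ) env

/-- `γ ∈ ⟦env, af(h)⟧`: strategies that start after `h` but enforce `env` when the
compatible traces are concatenated to `h`. -/
def EnvAfter (env : LTLf (Xv ⊕ Yv)) (h : FTrace Xv Yv) (γ : EnvStrat Xv Yv) : Prop :=
  ∀ σ : AgStrat Xv Yv, SatAllPrefI (fappend h (traceOf γ σ)) env

/-- `γ ∈ ⟦env⟧^h`. -/
def EnvSpecH (env : LTLf (Xv ⊕ Yv)) (h : FTrace Xv Yv) (γ : EnvStrat Xv Yv) : Prop :=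
  ∀ σ : AgStrat Xv Yv, AgCompatH σ h →
    IsIPrefix h (traceOf γ σ) ∧ SatAllPrefI (traceOf γ σ) env

/-- `σ ▷_h φ`: `σ` enforces `φ` with respect to the history `h`. -/
def EnforcesWrt (env φ : LTLf (Xv ⊕ Yv)) (σ : AgStrat Xv Yv) (h : FTrace Xv Yv) : Prop :=
  ∀ γ : EnvStrat Xv Yv, EnforcesEnv env γ → h <+: play γ σ → Sat (play γ σ) φ

/-- `σ ▷_af(h) φ`: `σ` enforces `φ` after the history `h`. -/
def EnforcesAfter (env φ : LTLf (Xv ⊕ Yv)) (σ : AgStrat Xv Yv) (h : FTrace Xv Yv) : Prop :=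
  ∀ γ : EnvStrat Xv Yv, EnforcesEnv env γ → h <+: play γ σ → SatAt (play γ σ) φ h.length

/-- A deterministic automaton (acceptance conditions are given separately). -/
structure DA (L : Type) (Q : Type) where
  init : Q
  next : Q → L → Q

variable {L Q Q1 Q2 Q3 : Type}

/-- The run of a DA on an infinite word, from state `q`: `runFrom q π n` is the `n`-th
state `q_n` of the run. -/
def DA.runFrom (B : DA L Q) (q : Q) (π : ℕ → L) : ℕ → Q
  | 0 => q
  | n + 1 => B.next (B.runFrom q π n) (π n)

/-- The run of a DA on an infinite word from its initial state. -/
def DA.run (B : DA L Q) (π : ℕ → L) : ℕ → Q := B.runFrom B.init π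

/-- The state reached by a DA after reading a finite word from state `q`. -/
def DA.runList (B : DA L Q) : Q → List L → Q
  | q, [] => q
  | q, a :: w => B.runList (B.next q a) w

/-- Product of two DAs. -/
def prod2 (A : DA L Q1) (B : DA L Q2) : DA L (Q1 × Q2) :=
  ⟨(A.init, B.init), fun q a => (A.next q.1 a, B.next q.2 a)⟩

/-- Product of three DAs. -/
def prod3 (A : DA L Q1) (B : DA L Q2) (C : DA L Q3) : DA L (Q1 × Q2 × Q3) :=
  ⟨(A.init, B.init, C.init), fun q a => (A.next q.1 a, B.next q.2.1 a, C.next q.2.2 a)⟩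

/-- The environment winning region of the safety game on a DA with safe set `S`. -/
def EnvWinSet (B : DA (Letter Xv Yv) Q) (S : Set Q) : Set Q :=
  {q | ∃ γ : EnvStrat Xv Yv, ∀ σ : AgStrat Xv Yv, ∀ k, B.runFrom q (traceOf γ σ) k ∈ S}

/-- Least-fixpoint approximants of the reachability game with target `R`. -/
def AgnApprox (B : DA (Letter Xv Yv) Q) (R : Set Q) : ℕ → Set Q
  | 0 => R
  | l + 1 => AgnApprox B R l ∪
      {q | ∀ x : EMove Xv, ∃ y : AMove Yv, B.next q (x, y) ∈ AgnApprox B R l}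

/-- Agent winning region of the reachability game (union of the approximants). -/
def Agn (B : DA (Letter Xv Yv) Q) (R : Set Q) : Set Q := ⋃ l, AgnApprox B R l

/-- Least-fixpoint approximants of the reachability game restricted to `Legal` states, where
the environment may only choose moves satisfying `Allowed` (this also subsumes the
reachability–safety reduction, with `Legal` the safe set, since non-`Legal` sink states never
enter any approximant). -/
def RAgnApprox (B : DA (Letter Xv Yv) Q) (Legal : Set Q)
    (Allowed : Q → EMove Xv → Prop) (R : Set Q) : ℕ → Set Q
  | 0 => R ∩ Legal
  | l + 1 => RAgnApprox B Legal Allowed R l ∪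
      {q | q ∈ Legal ∧ ∀ x : EMove Xv, Allowed q x →
        ∃ y : AMove Yv, B.next q (x, y) ∈ RAgnApprox B Legal Allowed R l}

/-- Agent winning region of the restricted reachability game. -/
def RAgn (B : DA (Letter Xv Yv) Q) (Legal : Set Q)
    (Allowed : Q → EMove Xv → Prop) (R : Set Q) : Set Q :=
  ⋃ l, RAgnApprox B Legal Allowed R l

/-- The greatest subset `E ⊆ S` such that from every state of `E` the environment has a move
keeping the game in `E` whatever the agent responds (greatest fixpoint). -/
def EnvGfp (B : DA (Letter Xv Yv) Q) (S : Set Q) : Set Q :=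
  ⋃₀ {E : Set Q | E ⊆ S ∧ ∀ q ∈ E, ∃ x : EMove Xv, ∀ y : AMove Yv, B.next q (x, y) ∈ E}


section Aux

variable {Xv Yv Q : Type}

lemma pref_succ (π : ITrace Xv Yv) (n : ℕ) : pref π (n + 1) = pref π n ++ [π n] := by
  simp [pref, List.range_succ]

lemma pref_length (π : ITrace Xv Yv) (n : ℕ) : (pref π n).length = n := by simp [pref]

lemma runList_append (B : DA (Letter Xv Yv) Q) (q : Q) (u v : FTrace Xv Yv) :
    B.runList q (u ++ v) = B.runList (B.runList q u) v := by
  induction u generalizing q with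
  | nil => rfl
  | cons a u ih => simp [DA.runList, ih]

lemma runFrom_eq (B : DA (Letter Xv Yv) Q) (q : Q) (π : ITrace Xv Yv) (n : ℕ) :
    B.runFrom q π n = B.runList q (pref π n) := by
  induction n with
  | zero => rfl
  | succ n ih => rw [DA.runFrom, pref_succ, runList_append, ih]; rfl

lemma runFrom_congr (B : DA (Letter Xv Yv) Q) (q : Q) {π π' : ITrace Xv Yv} (n : ℕ)
    (hp : ∀ i < n, π i = π' i) : B.runFrom q π n = B.runFrom q π' n := by
  induction n with
  | zero => rfl
  | succ n ih =>
      rw [DA.runFrom, DA.runFrom, ih (fun i hi => hp i (Nat.lt_succ_of_lt hi)),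
        hp n (Nat.lt_succ_self n)]

lemma runFrom_add (B : DA (Letter Xv Yv) Q) (q : Q) (π : ITrace Xv Yv) (k j : ℕ) :
    B.runFrom q π (k + j) = B.runFrom (B.runFrom q π k) (shift π k) j := by
  induction j with
  | zero => rfl
  | succ j ih => rw [← Nat.add_assoc, DA.runFrom, DA.runFrom, ih]; rfl

lemma traceAux_succ (γ : EnvStrat Xv Yv) (σ : AgStrat Xv Yv) (n : ℕ) :
    traceAux γ σ (n + 1) = traceAux γ σ n ++ [traceOf γ σ n] := rfl

lemma traceAux_length (γ : EnvStrat Xv Yv) (σ : AgStrat Xv Yv) (n : ℕ) :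
    (traceAux γ σ n).length = n := by
  induction n with
  | zero => rfl
  | succ n ih => rw [traceAux_succ]; simp [ih]

lemma pref_fappend (h : FTrace Xv Yv) (π : ITrace Xv Yv) {n : ℕ} (hn : n ≤ h.length) :
    pref (fappend h π) n = h.take n := by
  apply List.ext_getElem
  · simp [pref_length, hn]
  · intro i hi hi'
    have hiln : i < n := by simpa [pref_length] using hi
    have hil : i < h.length := lt_of_lt_of_le hiln hn
    simp [pref, fappend, hil]

lemma shift_fappend (h : FTrace Xv Yv) (π : ITrace Xv Yv) :
    shift (fappend h π) h.length = π := by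
  funext j
  simp [shift, fappend]

lemma run_fappend_le (B : DA (Letter Xv Yv) Q) (h : FTrace Xv Yv) (π : ITrace Xv Yv)
    {n : ℕ} (hn : n ≤ h.length) :
    B.run (fappend h π) n = B.runList B.init (h.take n) := by
  rw [DA.run, runFrom_eq, pref_fappend h π hn]

lemma run_fappend_add (B : DA (Letter Xv Yv) Q) (h : FTrace Xv Yv) (π : ITrace Xv Yv)
    (m : ℕ) :
    B.run (fappend h π) (h.length + m) = B.runFrom (B.runList B.init h) π m := by
  have h1 : B.runFrom B.init (fappend h π) h.length = B.runList B.init h := by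
    rw [runFrom_eq, pref_fappend h π le_rfl, List.take_length]
  rw [DA.run, runFrom_add, shift_fappend, h1]

lemma traceAux_agree (γ : EnvStrat Xv Yv) (σ σ'' : AgStrat Xv Yv) (k : ℕ)
    (hσ : ∀ xs : List (EMove Xv), xs.length ≤ k → σ'' xs = σ xs) :
    ∀ n ≤ k, traceAux γ σ'' n = traceAux γ σ n := by
  intro n hn
  induction n with
  | zero => rfl
  | succ n ih =>
      have ihn := ih (Nat.le_of_succ_le hn)
      show (traceAux γ σ'' n) ++ _ = (traceAux γ σ n) ++ _
      rw [ihn]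
      have hlen : (List.map Prod.fst (traceAux γ σ n) ++
          [γ (List.map Prod.snd (traceAux γ σ n))]).length ≤ k := by
        simpa [traceAux_length] using hn
      rw [hσ _ hlen]

lemma traceAux_shift (γ γ' : EnvStrat Xv Yv) (σ σ' σ'' : AgStrat Xv Yv) (k : ℕ)
    (hγ' : ∀ ys, γ' ys = γ ((traceAux γ σ k).map Prod.snd ++ ys))
    (hσ1 : ∀ xs : List (EMove Xv), xs.length ≤ k → σ'' xs = σ xs)
    (hσ2 : ∀ xs : List (EMove Xv), k < xs.length → σ'' xs = σ' (xs.drop k)) :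
    ∀ m, traceAux γ σ'' (k + m) = traceAux γ σ k ++ traceAux γ' σ' m := by
  intro m
  induction m with
  | zero => simpa [traceAux] using traceAux_agree γ σ σ'' k hσ1 k le_rfl
  | succ m ih =>
      rw [← Nat.add_assoc]
      show (traceAux γ σ'' (k + m)) ++
          [(γ ((traceAux γ σ'' (k + m)).map Prod.snd),
            σ'' ((traceAux γ σ'' (k + m)).map Prod.fst ++
              [γ ((traceAux γ σ'' (k + m)).map Prod.snd)]))] = _
      rw [ih]
      have hx : γ (((traceAux γ σ k ++ traceAux γ' σ' m)).map Prod.snd)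
          = γ' ((traceAux γ' σ' m).map Prod.snd) := by
        rw [hγ', List.map_append]
      have hy : σ'' ((traceAux γ σ k ++ traceAux γ' σ' m).map Prod.fst ++
            [γ ((traceAux γ σ k ++ traceAux γ' σ' m).map Prod.snd)])
          = σ' ((traceAux γ' σ' m).map Prod.fst ++
            [γ' ((traceAux γ' σ' m).map Prod.snd)]) := by
        rw [hσ2]
        · rw [List.map_append, List.append_assoc]
          have hlen : ((traceAux γ σ k).map Prod.fst).length = k := by
            simp [traceAux_length]
          rw [List.drop_left' hlen, hx]
        · simp [traceAux_length]
      rw [hy, hx]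
      show _ = traceAux γ σ k ++ ((traceAux γ' σ' m) ++ _)
      rw [← List.append_assoc]

lemma traceOf_of_traceAux {γ γ' : EnvStrat Xv Yv} {σ σ' : AgStrat Xv Yv} {n m : ℕ}
    (h1 : traceAux γ σ n = traceAux γ' σ' m)
    (h2 : traceAux γ σ (n + 1) = traceAux γ' σ' (m + 1)) :
    traceOf γ σ n = traceOf γ' σ' m := by
  rw [traceAux_succ, traceAux_succ, h1] at h2
  have := List.append_cancel_left h2
  simpa using this

lemma envWin_subset (B : DA (Letter Xv Yv) Q) (S : Set Q) : EnvWinSet B S ⊆ S := by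
  rintro q ⟨γ₀, hγ₀⟩
  exact hγ₀ (fun _ => stopMove) 0

end Aux

/-- Lemma 6: assuming the run of `A_e` on `h` visits only states of the
environment winning region `Env`, an environment strategy `γ` belongs to `⟦env, af(h)⟧` iff
for every agent strategy the run of `A_e` on `Trace(γ,σ)` started from the state `q_h`
reached after reading `h` visits only states in `Env`. -/
theorem statement11 {Xv Yv Qe : Type} [Fintype Xv] [Fintype Yv] [Fintype Qe]
    (env : LTLf (Xv ⊕ Yv)) (Ae : DA (Letter Xv Yv) Qe) (S : Set Qe)
    (hL : ∀ π : ITrace Xv Yv, (∀ k, Ae.run π k ∈ S) ↔ SatAllPrefI π env)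
    (h : FTrace Xv Yv)
    (hrun : ∀ k ≤ h.length, Ae.runList Ae.init (h.take k) ∈ EnvWinSet Ae S)
    (γ : EnvStrat Xv Yv) :
    EnvAfter env h γ ↔
      ∀ σ : AgStrat Xv Yv, ∀ k,
        Ae.runFrom (Ae.runList Ae.init h) (traceOf γ σ) k ∈ EnvWinSet Ae S := by
  constructor
  · -- γ ∈ ⟦env, af(h)⟧ → all states of the run from q_h are environment winning
    intro H σ k
    refine ⟨fun ys => γ ((traceAux γ σ k).map Prod.snd ++ ys), fun σ' j => ?_⟩
    set γ' : EnvStrat Xv Yv := fun ys => γ ((traceAux γ σ k).map Prod.snd ++ ys) with hγ'def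
    set σ'' : AgStrat Xv Yv :=
      fun xs => if xs.length ≤ k then σ xs else σ' (xs.drop k) with hσ''def
    have hσ1 : ∀ xs : List (EMove Xv), xs.length ≤ k → σ'' xs = σ xs := by
      intro xs hxs; simp [hσ''def, hxs]
    have hσ2 : ∀ xs : List (EMove Xv), k < xs.length → σ'' xs = σ' (xs.drop k) := by
      intro xs hxs; simp [hσ''def, Nat.not_le.mpr hxs]
    have hA := traceAux_agree γ σ σ'' k hσ1
    have hSft := traceAux_shift γ γ' σ σ' σ'' k (fun _ => rfl) hσ1 hσ2
    -- letters agree before k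
    have hlt : ∀ n < k, traceOf γ σ'' n = traceOf γ σ n := by
      intro n hn
      exact traceOf_of_traceAux (hA n (le_of_lt hn)) (hA (n + 1) hn)
    -- after k the trace is traceOf γ' σ'
    have hsh : shift (traceOf γ σ'') k = traceOf γ' σ' := by
      funext m
      have e1 : traceAux γ σ'' (k + m) = traceAux γ σ k ++ traceAux γ' σ' m := hSft m
      have e2 : traceAux γ σ'' (k + m + 1)
          = traceAux γ σ k ++ traceAux γ' σ' (m + 1) := by
        rw [Nat.add_assoc]; exact hSft (m + 1)
      have : traceOf γ σ'' (k + m) = traceOf γ' σ' m := by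
        rw [traceAux_succ, traceAux_succ, e1, List.append_assoc] at e2
        have := List.append_cancel_left e2
        have := List.append_cancel_left this
        simpa using this
      simpa [shift] using this
    have hrunk : Ae.runFrom (Ae.runList Ae.init h) (traceOf γ σ'') k
        = Ae.runFrom (Ae.runList Ae.init h) (traceOf γ σ) k :=
      runFrom_congr Ae _ k hlt
    -- states of the run on h · traceOf γ σ'' are all in S
    have hS : ∀ n, Ae.run (fappend h (traceOf γ σ'')) n ∈ S :=
      (hL (fappend h (traceOf γ σ''))).mpr (H σ'')
    have key := hS (h.length + (k + j))
    rw [run_fappend_add, runFrom_add, hrunk, hsh] at key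
    exact key
  · -- converse direction
    intro H σ
    rw [← hL]
    intro n
    rcases le_or_gt n h.length with hn | hn
    · rw [run_fappend_le Ae h _ hn]
      exact envWin_subset Ae S (hrun n hn)
    · have hn' : n = h.length + (n - h.length) := by omega
      rw [hn', run_fappend_add]
      exact envWin_subset Ae S (H σ (n - h.length))

end RightsSynth
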